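/- arXiv:2403.05071 — 3 statements merged into one kernel-verified Lean document; each statement's English description precedes it below -/
import Mathlib

section
/- Let T ∈ B_{A^{1/2}}(H) with reduced solution T^◇ of the equation A^{1/2}X = T*A^{1/2} with R(T^◇) ⊆ cl(R(A^{1/2})). Then the conjugate of the A-spectrum of T^◇ equals the A-spectrum of T: {conj(λ) : λ ∈ σ_A(T^◇)} = σ_A(T). -/
open Filter Topology ContinuousLinearMap

variable {H : Type*} [NormedAddCommGroup H] [InnerProductSpace ℂ H] [CompleteSpace H]

/-- The `A`-seminorm `‖x‖_A = ⟨Ax,x⟩^{1/2}`. -/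
noncomputable def anorm (A : H →L[ℂ] H) (x : H) : ℝ :=
  Real.sqrt (inner ℂ (A x) x : ℂ).re

/-- `B_{A^{1/2}}(H)`: the `A`-bounded operators. -/
def MemBAhalf (A T : H →L[ℂ] H) : Prop :=
  ∃ d > 0, ∀ ξ : H, anorm A (T ξ) ≤ d * anorm A ξ

/-- `B_A(H)`: operators admitting an `A`-adjoint. -/
def MemBA (A T : H →L[ℂ] H) : Prop :=
  Set.range (fun x => ContinuousLinearMap.adjoint T (A x)) ⊆ Set.range A

/-- A-invertibility in `B_{A^{1/2}}(H)`. -/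
def AInvertibleHalf (A T : H →L[ℂ] H) : Prop :=
  ∃ S : H →L[ℂ] H, S ≠ 0 ∧ MemBAhalf A S ∧ A ∘L T ∘L S = A ∧ A ∘L S ∘L T = A

/-- A-invertibility in `B_A(H)`. -/
def AInvertibleBA (A T : H →L[ℂ] H) : Prop :=
  ∃ S : H →L[ℂ] H, S ≠ 0 ∧ MemBA A S ∧ A ∘L T ∘L S = A ∧ A ∘L S ∘L T = A

/-- The `A`-approximate point spectrum. -/
def sigmaAapp (A T : H →L[ℂ] H) : Set ℂ :=
  {lam | ∃ x : ℕ → H, (∀ n, anorm A (x n) = 1) ∧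
    Tendsto (fun n => anorm A (T (x n) - lam • x n)) atTop (nhds 0)}

/-- The `A`-spectrum. -/
def sigmaA (A T : H →L[ℂ] H) : Set ℂ :=
  {lam | ¬ AInvertibleHalf A (lam • (1 : H →L[ℂ] H) - T)}

/-- The `A`-numerical range. -/
def WA (A T : H →L[ℂ] H) : Set ℂ :=
  {z | ∃ x : H, anorm A x = 1 ∧ z = (inner ℂ (A (T x)) x : ℂ)}

/-- The `A`-operator seminorm, sup over the closure of the range of `A`. -/
noncomputable def AopnormCl (A T : H →L[ℂ] H) : ℝ :=
  sSup {r | ∃ ξ ∈ closure (Set.range A), anorm A ξ ≤ 1 ∧ r = anorm A (T ξ)}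

/-- The `A`-operator seminorm, sup over all vectors of `A`-seminorm at most one. -/
noncomputable def Aopnorm (A T : H →L[ℂ] H) : ℝ :=
  sSup {r | ∃ ξ : H, anorm A ξ ≤ 1 ∧ r = anorm A (T ξ)}

/-- The `A`-numerical radius. -/
noncomputable def wA (A T : H →L[ℂ] H) : ℝ :=
  sSup {r | ∃ x : H, anorm A x = 1 ∧ r = ‖(inner ℂ (A (T x)) x : ℂ)‖}

/-- The `A`-reduced minimum modulus. -/
noncomputable def gammaA (A T : H →L[ℂ] H) : ℝ :=
  sInf {r | ∃ ξ : H, (∀ y : H, anorm A (T y) = 0 → (inner ℂ (A ξ) y : ℂ) = 0) ∧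
    anorm A ξ = 1 ∧ r = anorm A (T ξ)}

/-- closure of the range of `A` as a submodule. -/
noncomputable def rangeClosure (A : H →L[ℂ] H) : Submodule ℂ H :=
  (LinearMap.range (A : H →ₗ[ℂ] H)).topologicalClosure

noncomputable instance (A : H →L[ℂ] H) : CompleteSpace (rangeClosure A) :=
  (Submodule.isClosed_topologicalClosure _).completeSpace_coe

/-- orthogonal projection onto the closure of the range of `A`, as an operator on `H`. -/
noncomputable def Pcl (A : H →L[ℂ] H) : H →L[ℂ] H :=
  (rangeClosure A).subtypeL ∘L Submodule.orthogonalProjectionOnto (rangeClosure A)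

/-! The adjoint relation `A^{1/2} T^◇ = T^* A^{1/2}` survives the shift to `λ̄ - T^◇` and
`λ - T`, and it can be read in both directions. So it suffices to see that whenever
`A^{1/2} V = U^* A^{1/2}` and `U` is `A`-invertible with `A`-inverse `S`, then `V` is
`A`-invertible. Since `S` is `A^{1/2}`-bounded, a Douglas-type factorisation gives `W` with
`A^{1/2} W = S^* A^{1/2}`, and `W` is an `A`-inverse of `V`: because `ker A = ker A^{1/2}`,
the identities `A X = A` are equivalent to `A^{1/2} X = A^{1/2}`, and for `X = V W`, `W V`
these follow from the adjoints of `A^{1/2} S U = A^{1/2}` and `A^{1/2} U S = A^{1/2}`. -/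

theorem ContinuousLinearMap.exists_comp_eq_of_norm_le {𝕜 E F G : Type*} [RCLike 𝕜]
    [NormedAddCommGroup E] [NormedSpace 𝕜 E]
    [NormedAddCommGroup F] [InnerProductSpace 𝕜 F] [CompleteSpace F]
    [NormedAddCommGroup G] [NormedSpace 𝕜 G] [CompleteSpace G]
    (R : E →L[𝕜] F) (M : E →L[𝕜] G) (h : ∃ d, ∀ x, ‖M x‖ ≤ d * ‖R x‖) :
    ∃ C : F →L[𝕜] G, C ∘L R = M := by
  set K := (LinearMap.range (R : E →ₗ[𝕜] F)).topologicalClosure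
  let e : E →ₗ[𝕜] K := (R : E →ₗ[𝕜] F).codRestrict K
    fun x => Submodule.le_topologicalClosure _ (LinearMap.mem_range_self (R : E →ₗ[𝕜] F) x)
  have he : DenseRange e := by
    refine Subtype.dense_iff.2 ?_
    rw [← Set.range_comp]
    exact subset_rfl
  refine ⟨(M : E →ₗ[𝕜] G).extendOfNorm e ∘L K.orthogonalProjectionOnto, ?_⟩
  ext x
  have hx : K.orthogonalProjectionOnto (R x) = e x :=
    Submodule.orthogonalProjectionOnto_mem_subspace_eq_self (e x)
  simp only [comp_apply, hx]
  exact LinearMap.extendOfNorm_eq he h x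

section SelfAdjointSquare

variable {R : H →L[ℂ] H}

theorem IsSelfAdjoint.anorm_comp_self (hR : IsSelfAdjoint R) (x : H) :
    anorm (R ∘L R) x = ‖R x‖ := by
  have h : (inner ℂ ((R ∘L R) x) x : ℂ) = inner ℂ (R x) (R x) := by
    rw [comp_apply, ← adjoint_inner_left, hR.adjoint_eq]
  rw [anorm, h, ← RCLike.re_to_complex, inner_self_eq_norm_sq, Real.sqrt_sq (norm_nonneg _)]

theorem IsSelfAdjoint.memBAhalf_comp_self_iff (hR : IsSelfAdjoint R) (T : H →L[ℂ] H) :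
    MemBAhalf (R ∘L R) T ↔ ∃ d > 0, ∀ x, ‖R (T x)‖ ≤ d * ‖R x‖ := by
  simp only [MemBAhalf, hR.anorm_comp_self]

theorem IsSelfAdjoint.comp_self_comp_eq_iff (hR : IsSelfAdjoint R) (X : H →L[ℂ] H) :
    (R ∘L R) ∘L X = R ∘L R ↔ R ∘L X = R := by
  refine ⟨fun h => ?_, fun h => by rw [comp_assoc, h]⟩
  ext x
  have hker : X x - x ∈ (adjoint R ∘L R).ker := by
    simpa [hR.adjoint_eq, sub_eq_zero] using congr($h x)
  rw [ker_adjoint_comp_self, LinearMap.mem_ker, map_sub, sub_eq_zero] at hker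
  exact hker

theorem IsSelfAdjoint.comp_eq_adjoint_comp_symm (hR : IsSelfAdjoint R) {U V : H →L[ℂ] H}
    (h : R ∘L V = adjoint U ∘L R) : R ∘L U = adjoint V ∘L R := by
  have h' := congr(adjoint $h)
  rw [adjoint_comp, adjoint_comp, adjoint_adjoint, hR.adjoint_eq] at h'
  exact h'.symm

theorem comp_smul_one_sub_eq_adjoint_comp {U V : H →L[ℂ] H} (h : R ∘L V = adjoint U ∘L R)
    (μ : ℂ) : R ∘L (starRingEnd ℂ μ • 1 - V) = adjoint (μ • 1 - U) ∘L R := by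
  rw [← star_eq_adjoint, star_sub, star_smul, star_one, star_eq_adjoint, comp_sub, sub_comp, h,
    comp_smul, smul_comp, one_def, comp_id, id_comp, starRingEnd_apply]

theorem IsSelfAdjoint.aInvertibleHalf_of_comp_eq_adjoint_comp (hR : IsSelfAdjoint R)
    (hR0 : R ∘L R ≠ 0) {U V : H →L[ℂ] H} (hUV : R ∘L V = adjoint U ∘L R)
    (hU : AInvertibleHalf (R ∘L R) U) : AInvertibleHalf (R ∘L R) V := by
  obtain ⟨S, -, hS, hUS, hSU⟩ := hU
  rw [hR.comp_self_comp_eq_iff] at hUS hSU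
  obtain ⟨d, -, hd⟩ := (hR.memBAhalf_comp_self_iff S).1 hS
  obtain ⟨C, hC⟩ := exists_comp_eq_of_norm_le R (R ∘L S) ⟨d, hd⟩
  have hRW : R ∘L adjoint C = adjoint S ∘L R := by
    rw [← hR.adjoint_eq, ← adjoint_comp, hC, adjoint_comp]
  have hUS_adj : (adjoint S ∘L adjoint U) ∘L R = R := by
    simpa [adjoint_comp, hR.adjoint_eq] using congr(adjoint $hUS)
  have hSU_adj : (adjoint U ∘L adjoint S) ∘L R = R := by
    simpa [adjoint_comp, hR.adjoint_eq] using congr(adjoint $hSU)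
  refine ⟨adjoint C, ?_, ?_, ?_, ?_⟩
  · intro hC0
    have hRS : R ∘L S = 0 := by
      simpa [hC0, adjoint_comp, hR.adjoint_eq] using congr(adjoint $hRW).symm
    apply hR0
    nth_rewrite 2 [← hSU]
    rw [← comp_assoc R S U, hRS, zero_comp, comp_zero]
  · refine (hR.memBAhalf_comp_self_iff _).2 ⟨‖adjoint S‖ + 1, by positivity, fun x => ?_⟩
    calc ‖R (adjoint C x)‖ = ‖adjoint S (R x)‖ := congr(‖$hRW x‖)
      _ ≤ ‖adjoint S‖ * ‖R x‖ := le_opNorm _ _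
      _ ≤ (‖adjoint S‖ + 1) * ‖R x‖ := by gcongr; linarith
  · rw [hR.comp_self_comp_eq_iff, ← comp_assoc, hUV, comp_assoc, hRW, ← comp_assoc, hSU_adj]
  · rw [hR.comp_self_comp_eq_iff, ← comp_assoc, hRW, comp_assoc, hUV, ← comp_assoc, hUS_adj]

end SelfAdjointSquare

theorem stmt10_general (A T sqrtA Tdia : H →L[ℂ] H) (hA0 : A ≠ 0)
    (hsqpos : sqrtA.IsPositive) (hsq : sqrtA ∘L sqrtA = A)
    (hdia : sqrtA ∘L Tdia = (ContinuousLinearMap.adjoint T) ∘L sqrtA) :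
    (fun z : ℂ => starRingEnd ℂ z) '' sigmaA A Tdia = sigmaA A T := by
  subst hsq
  have hR := hsqpos.isSelfAdjoint
  have hinv_iff (μ : ℂ) : AInvertibleHalf (sqrtA ∘L sqrtA) (starRingEnd ℂ μ • 1 - Tdia) ↔
      AInvertibleHalf (sqrtA ∘L sqrtA) (μ • 1 - T) := by
    have hTdia := comp_smul_one_sub_eq_adjoint_comp (hR.comp_eq_adjoint_comp_symm hdia)
      (starRingEnd ℂ μ)
    rw [Complex.conj_conj] at hTdia
    exact ⟨hR.aInvertibleHalf_of_comp_eq_adjoint_comp hA0 hTdia,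
      hR.aInvertibleHalf_of_comp_eq_adjoint_comp hA0 (comp_smul_one_sub_eq_adjoint_comp hdia μ)⟩
  ext z
  rw [Set.image_eq_preimage_of_inverse (f := starRingEnd ℂ) Complex.conj_conj Complex.conj_conj]
  simp only [Set.mem_preimage, sigmaA, Set.mem_ofPred_eq]
  rw [← hinv_iff]

/-- `(σ_A(T^◇))^* = σ_A(T)`, where `T^◇` is the reduced solution of
`A^{1/2} X = T^* A^{1/2}`. -/
theorem stmt10 (A T sqrtA Tdia : H →L[ℂ] H) (hA : A.IsPositive) (hA0 : A ≠ 0)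
    (hsqpos : sqrtA.IsPositive) (hsq : sqrtA ∘L sqrtA = A)
    (hT : MemBAhalf A T)
    (hdia : sqrtA ∘L Tdia = (ContinuousLinearMap.adjoint T) ∘L sqrtA)
    (hrange : Set.range Tdia ⊆ closure (Set.range sqrtA)) :
    (fun z : ℂ => starRingEnd ℂ z) '' sigmaA A Tdia = sigmaA A T :=
  stmt10_general A T sqrtA Tdia hA0 hsqpos hsq hdia
end

section
/- Let T, T' ∈ B_A(H) with T^♯(T')^♯ = (T')^♯T^♯. Then T and T' are both A-invertible in B_A(H) if and only if TT' is A-invertible in B_A(H). -/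
open Filter Topology ContinuousLinearMap

variable {H : Type*} [NormedAddCommGroup H] [InnerProductSpace ℂ H] [CompleteSpace H]

/-!
Write `X ≡ Y` when `A X = A Y`. Operators in `B_A(H)` map `ker A` into itself (as `A` is
self-adjoint), so `≡` is a congruence on the monoid `B_A(H)`, and `A`-invertibility in `B_A(H)` is
invertibility in the quotient monoid. The commuting `A`-adjoints give `A T T' = A T' T`, i.e. the
classes of `T` and `T'` commute, and in any monoid a product of two commuting elements is a unit
iff both factors are.
-/

section

variable {A : H →L[ℂ] H}

theorem memBA_one : MemBA A 1 := by
  rintro _ ⟨x, rfl⟩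
  exact ⟨x, by simp only [adjoint_one]; rfl⟩

theorem MemBA.comp {S S' : H →L[ℂ] H} (hS : MemBA A S) (hS' : MemBA A S') :
    MemBA A (S ∘L S') := by
  rintro _ ⟨x, rfl⟩
  obtain ⟨v, hv⟩ := hS ⟨x, rfl⟩
  obtain ⟨w, hw⟩ := hS' ⟨v, rfl⟩
  exact ⟨w, by simp only [adjoint_comp, comp_apply] at hv hw ⊢; rw [hw, hv]⟩

theorem MemBA.apply_eq_zero (hA : IsSelfAdjoint A) {S : H →L[ℂ] H} (hS : MemBA A S) {x : H}
    (hx : A x = 0) : A (S x) = 0 := by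
  obtain ⟨v, hv⟩ := hS ⟨A (S x), rfl⟩
  change A v = adjoint S (A (A (S x))) at hv
  rw [← inner_self_eq_zero (𝕜 := ℂ)]
  calc (inner ℂ (A (S x)) (A (S x)) : ℂ)
      = inner ℂ (S x) (A (A (S x))) := hA.isSymmetric _ _
    _ = inner ℂ x (A v) := by rw [hv, adjoint_inner_right]
    _ = inner ℂ (A x) v := (hA.isSymmetric _ _).symm
    _ = 0 := by rw [hx, inner_zero_left]

theorem MemBA.comp_congr (hA : IsSelfAdjoint A) {S X Y : H →L[ℂ] H} (hS : MemBA A S)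
    (h : A ∘L X = A ∘L Y) : A ∘L S ∘L X = A ∘L S ∘L Y := by
  ext x
  have hx : A (X x - Y x) = 0 := by
    rw [map_sub, sub_eq_zero]
    exact congrArg (· x) h
  simpa [sub_eq_zero] using hS.apply_eq_zero hA hx

theorem comp_eq_adjoint_comp (hA : IsSelfAdjoint A) {T Ts : H →L[ℂ] H}
    (hTs : adjoint T ∘L A = A ∘L Ts) : A ∘L T = adjoint Ts ∘L A := by
  simpa [adjoint_comp, hA.adjoint_eq] using congrArg adjoint hTs

theorem comp_comm_of_adjoint_comm (hA : IsSelfAdjoint A) {T T' Ts Ts' : H →L[ℂ] H}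
    (hTs : adjoint T ∘L A = A ∘L Ts) (hTs' : adjoint T' ∘L A = A ∘L Ts')
    (hcomm : Ts ∘L Ts' = Ts' ∘L Ts) : A ∘L T ∘L T' = A ∘L T' ∘L T := by
  have hT := comp_eq_adjoint_comp hA hTs
  have hT' := comp_eq_adjoint_comp hA hTs'
  calc A ∘L T ∘L T' = adjoint (Ts' ∘L Ts) ∘L A := by
        rw [← comp_assoc, hT, comp_assoc, hT', adjoint_comp, comp_assoc]
    _ = adjoint (Ts ∘L Ts') ∘L A := by rw [hcomm]
    _ = A ∘L T' ∘L T := by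
        rw [← comp_assoc, hT', comp_assoc, hT, adjoint_comp, comp_assoc]

variable (A) in
def submonoidBA : Submonoid (H →L[ℂ] H) where
  carrier := {T | MemBA A T}
  one_mem' := memBA_one
  mul_mem' := MemBA.comp

def conBA (hA : IsSelfAdjoint A) : Con (submonoidBA A) where
  r X Y := A ∘L (X : H →L[ℂ] H) = A ∘L Y
  iseqv := ⟨fun _ => rfl, Eq.symm, Eq.trans⟩
  mul' {W X Y Z} hWX hYZ := by
    change A ∘L (W : H →L[ℂ] H) ∘L Y = A ∘L (X : H →L[ℂ] H) ∘L (Z : H →L[ℂ] H)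
    rw [← comp_assoc, hWX, comp_assoc]
    exact MemBA.comp_congr hA X.2 hYZ

theorem conBA_one_iff (hA : IsSelfAdjoint A) (X : submonoidBA A) :
    conBA hA X 1 ↔ A ∘L (X : H →L[ℂ] H) = A :=
  iff_of_eq (congrArg _ (comp_id A))

theorem aInvertibleBA_iff_isUnit (hA : IsSelfAdjoint A) (hA0 : A ≠ 0) (T : submonoidBA A) :
    AInvertibleBA A T ↔ IsUnit (T : (conBA hA).Quotient) := by
  simp only [isUnit_iff_exists, ← Con.coe_one]
  constructor
  · rintro ⟨S, -, hS, hTS, hST⟩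
    refine ⟨(⟨S, hS⟩ : submonoidBA A), ?_, ?_⟩ <;> rw [← Con.coe_mul, Con.eq, conBA_one_iff]
    exacts [hTS, hST]
  · rintro ⟨S, hTS, hST⟩
    induction S using Con.induction_on with | H S => ?_
    rw [← Con.coe_mul, Con.eq, conBA_one_iff] at hTS hST
    refine ⟨S, fun hS0 => hA0 ?_, S.2, hTS, hST⟩
    change A ∘L (T : H →L[ℂ] H) ∘L S = A at hTS
    simpa [hS0] using hTS.symm

end

theorem stmt13_general (A T T' Ts Ts' : H →L[ℂ] H) (hA : A.IsPositive) (hA0 : A ≠ 0)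
    (hT : MemBA A T) (hT' : MemBA A T')
    (hTs : (ContinuousLinearMap.adjoint T) ∘L A = A ∘L Ts)
    (hTs' : (ContinuousLinearMap.adjoint T') ∘L A = A ∘L Ts')
    (hcomm : Ts ∘L Ts' = Ts' ∘L Ts) :
    (AInvertibleBA A T ∧ AInvertibleBA A T') ↔ AInvertibleBA A (T ∘L T') := by
  have hA' := hA.isSelfAdjoint
  let X : submonoidBA A := ⟨T, hT⟩
  let X' : submonoidBA A := ⟨T', hT'⟩
  have hXX' : Commute (X : (conBA hA').Quotient) X' := by
    rw [Commute, SemiconjBy, ← Con.coe_mul, ← Con.coe_mul, Con.eq]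
    exact comp_comm_of_adjoint_comm hA' hTs hTs' hcomm
  rw [aInvertibleBA_iff_isUnit hA' hA0 X, aInvertibleBA_iff_isUnit hA' hA0 X']
  exact hXX'.isUnit_mul_iff.symm.trans (aInvertibleBA_iff_isUnit hA' hA0 (X * X')).symm

/-- if `T, T' ∈ B_A(H)` with commuting `A`-adjoints `T^♯ (T')^♯ = (T')^♯ T^♯`,
then `T` and `T'` are both `A`-invertible in `B_A(H)` iff `T T'` is. -/
theorem stmt13 (A T T' Ts Ts' : H →L[ℂ] H) (hA : A.IsPositive) (hA0 : A ≠ 0)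
    (hT : MemBA A T) (hT' : MemBA A T')
    (hTs : (ContinuousLinearMap.adjoint T) ∘L A = A ∘L Ts)
    (hTsr : Set.range Ts ⊆ closure (Set.range A))
    (hTs' : (ContinuousLinearMap.adjoint T') ∘L A = A ∘L Ts')
    (hTsr' : Set.range Ts' ⊆ closure (Set.range A))
    (hcomm : Ts ∘L Ts' = Ts' ∘L Ts) :
    (AInvertibleBA A T ∧ AInvertibleBA A T') ↔ AInvertibleBA A (T ∘L T') :=
  stmt13_general A T T' Ts Ts' hA hA0 hT hT' hTs hTs' hcomm
end

section
/- Let T ∈ B_A(H). Then T is A-selfadjoint (T*A = AT) if and only if the A-numerical range W_A(T) is contained in ℝ. -/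
open Filter Topology ContinuousLinearMap

variable {H : Type*} [NormedAddCommGroup H] [InnerProductSpace ℂ H] [CompleteSpace H]

/-!
`T` is `A`-selfadjoint iff `A ∘L T` is selfadjoint, i.e. iff `⟪A (T x), x⟫` is real for
every `x`. For `‖x‖_A ≠ 0` this number is a positive multiple of a point of `W_A(T)`;
for `‖x‖_A = 0` positivity of `A` forces `A x = 0`, so `⟪A (T x), x⟫ = ⟪T x, A x⟫ = 0`.
-/

open scoped InnerProductSpace

-- `√A` turns `⟪A x, x⟫` into `‖√A x‖²`.
lemma ContinuousLinearMap.IsPositive.apply_eq_zero_of_re_inner_self_eq_zero {A : H →L[ℂ] H}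
    (hA : A.IsPositive) {x : H} (hx : (⟪A x, x⟫_ℂ).re = 0) : A x = 0 := by
  have hA_nonneg : 0 ≤ A := (nonneg_iff_isPositive A).mpr hA
  set S := CFC.sqrt A
  have hS : IsSelfAdjoint S := (CFC.sqrt_nonneg A).isSelfAdjoint
  have hSS : S * S = A := CFC.sqrt_mul_sqrt_self A
  have hSx : S x = 0 := by
    have h : ⟪A x, x⟫_ℂ = ⟪S x, S x⟫_ℂ := by
      rw [← hSS, mul_apply_eq_comp]
      exact hS.isSymmetric (S x) x
    have h_norm : ‖S x‖ ^ 2 = 0 := by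
      rw [← inner_self_eq_norm_sq (𝕜 := ℂ), ← h]
      exact hx
    simpa using h_norm
  rw [← hSS, mul_apply_eq_comp, hSx, map_zero]

lemma inner_map_smul_self {E : Type*} [NormedAddCommGroup E] [InnerProductSpace ℂ E]
    (B : E →L[ℂ] E) (c : ℂ) (x : E) :
    ⟪B (c • x), c • x⟫_ℂ = (‖c‖ ^ 2 : ℝ) * ⟪B x, x⟫_ℂ := by
  rw [map_smul, inner_smul_left, inner_smul_right, ← mul_assoc, Complex.conj_mul']
  push_cast
  rfl

lemma anorm_nonneg {E : Type*} [NormedAddCommGroup E] [InnerProductSpace ℂ E] (A : E →L[ℂ] E)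
    (x : E) : 0 ≤ anorm A x :=
  Real.sqrt_nonneg _

lemma anorm_smul {E : Type*} [NormedAddCommGroup E] [InnerProductSpace ℂ E] (A : E →L[ℂ] E)
    (c : ℂ) (x : E) : anorm A (c • x) = ‖c‖ * anorm A x := by
  rw [anorm, anorm, inner_map_smul_self, Complex.re_ofReal_mul, Real.sqrt_mul (by positivity),
    Real.sqrt_sq (norm_nonneg c)]

lemma inner_comp_self_eq_zero_of_anorm_eq_zero {A : H →L[ℂ] H} (hA : A.IsPositive)
    (T : H →L[ℂ] H) {x : H} (hx : anorm A x = 0) : ⟪A (T x), x⟫_ℂ = 0 := by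
  have hre : (⟪A x, x⟫_ℂ).re = 0 :=
    le_antisymm (Real.sqrt_eq_zero'.mp hx) (hA.re_inner_nonneg_left x)
  rw [hA.inner_left_eq_inner_right, hA.apply_eq_zero_of_re_inner_self_eq_zero hre, inner_zero_right]

lemma im_inner_comp_self_eq_zero_of_WA_subset {A T : H →L[ℂ] H} (hA : A.IsPositive)
    (hW : WA A T ⊆ Set.range ((↑) : ℝ → ℂ)) (x : H) : (⟪A (T x), x⟫_ℂ).im = 0 := by
  by_cases hx : anorm A x = 0
  · rw [inner_comp_self_eq_zero_of_anorm_eq_zero hA T hx, Complex.zero_im]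
  set c : ℂ := (((anorm A x)⁻¹ : ℝ) : ℂ)
  have hc : ‖c‖ * anorm A x = 1 := by
    rw [Complex.norm_real, Real.norm_eq_abs, abs_inv,
      abs_of_nonneg (anorm_nonneg A x), inv_mul_cancel₀ hx]
  obtain ⟨r, hr⟩ := hW ⟨c • x, by rw [anorm_smul, hc], rfl⟩
  have him := congrArg Complex.im hr
  rw [show A (T (c • x)) = (A ∘L T) (c • x) from rfl, inner_map_smul_self, Complex.ofReal_im,
    Complex.im_ofReal_mul] at him
  have hc0 : ‖c‖ ^ 2 ≠ 0 := pow_ne_zero 2 (left_ne_zero_of_mul_eq_one hc)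
  exact (mul_eq_zero.mp him.symm).resolve_left hc0

theorem stmt14_general (A T : H →L[ℂ] H) (hA : A.IsPositive) :
    (ContinuousLinearMap.adjoint T) ∘L A = A ∘L T ↔
      WA A T ⊆ Set.range ((↑) : ℝ → ℂ) := by
  have hsa : (adjoint T) ∘L A = A ∘L T ↔ IsSelfAdjoint (A ∘L T) := by
    rw [isSelfAdjoint_iff', adjoint_comp, hA.isSelfAdjoint.adjoint_eq]
  rw [hsa, isSelfAdjoint_iff_isSymmetric, LinearMap.isSymmetric_iff_inner_map_self_real]
  constructor
  · rintro h _ ⟨x, -, rfl⟩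
    exact (Complex.conj_eq_iff_real.mp (h x)).imp fun r hr => hr.symm
  · intro hW x
    exact Complex.conj_eq_iff_im.mpr (im_inner_comp_self_eq_zero_of_WA_subset hA hW x)

/-- `T ∈ B_A(H)` is `A`-selfadjoint iff `W_A(T)` is real. -/
theorem stmt14 (A T : H →L[ℂ] H) (hA : A.IsPositive) (hA0 : A ≠ 0)
    (hT : MemBA A T) :
    (ContinuousLinearMap.adjoint T) ∘L A = A ∘L T ↔
      WA A T ⊆ Set.range ((↑) : ℝ → ℂ) :=
  stmt14_general A T hA
end
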